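/- For every r > 0, with u = √(4+2r+r²), u± = 6+r±u, a₀ = (80+31r)/(32(16+5r)), a± = (512+384r+106r²+13r³ ∓ u(256+18r+13r²))/(64u(16+5r)²), and q = (A)* the stationary frequency of A, the function g(t) = a₀e^{−4t} + a₊e^{−u₊t} + a₋e^{−u₋t} + q² is a strictly decreasing diffeomorphism from [0,∞) onto (q², g(0)]. -/
import Mathlib


open Real Filter Set

/-- u = √(4+2r+r²). -/
noncomputable def uu (r : ℝ) : ℝ := Real.sqrt (4 + 2*r + r^2)

/-- Stationary frequency of A in the JC+CpG model: q = (8+3r)/(2(16+5r)). -/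
noncomputable def qA (r : ℝ) : ℝ := (8 + 3*r) / (2 * (16 + 5*r))

/-- a₀ = (80+31r)/(32(16+5r)). -/
noncomputable def a0 (r : ℝ) : ℝ := (80 + 31*r) / (32 * (16 + 5*r))

/-- a₊. -/
noncomputable def ap (r : ℝ) : ℝ :=
  (512 + 384*r + 106*r^2 + 13*r^3 - uu r * (256 + 18*r + 13*r^2))
    / (64 * uu r * (16 + 5*r)^2)

/-- a₋. -/
noncomputable def am (r : ℝ) : ℝ :=
  (512 + 384*r + 106*r^2 + 13*r^3 + uu r * (256 + 18*r + 13*r^2))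
    / (64 * uu r * (16 + 5*r)^2)

/-- (A,A)(t) in the stationary JC+CpG model:
g(t) = a₀e^{−4t} + a₊e^{−u₊t} + a₋e^{−u₋t} + q². -/
noncomputable def gAA (r t : ℝ) : ℝ :=
  a0 r * Real.exp (-4 * t) + ap r * Real.exp (-(6 + r + uu r) * t)
    + am r * Real.exp (-(6 + r - uu r) * t) + (qA r)^2

section aux
variable {r : ℝ} (hr : 0 < r)

lemma uu_pos (hr : 0 < r) : 0 < uu r :=
  Real.sqrt_pos.2 (by nlinarith)

lemma uu_sq (hr : 0 < r) : (uu r)^2 = 4 + 2*r + r^2 :=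
  Real.sq_sqrt (by nlinarith)

lemma uu_lt (hr : 0 < r) : uu r < 6 + r := by
  have h1 := uu_pos hr
  have h2 := uu_sq hr
  nlinarith

lemma a0_pos (hr : 0 < r) : 0 < a0 r := by
  unfold a0; positivity

lemma am_pos (hr : 0 < r) : 0 < am r := by
  have h1 := uu_pos hr
  unfold am
  have : (0:ℝ) < 64 * uu r * (16 + 5*r)^2 := by positivity
  apply div_pos _ this
  nlinarith

lemma ap_pos (hr : 0 < r) : 0 < ap r := by
  have h1 := uu_pos hr
  have h2 := uu_sq hr
  unfold ap
  have hd : (0:ℝ) < 64 * uu r * (16 + 5*r)^2 := by positivity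
  apply div_pos _ hd
  have key : uu r * (256 + 18*r + 13*r^2) < 512 + 384*r + 106*r^2 + 13*r^3 := by
    nlinarith [sq_nonneg (uu r * (256 + 18*r + 13*r^2) - (512 + 384*r + 106*r^2 + 13*r^3)),
      mul_pos h1 (show (0:ℝ) < 256 + 18*r + 13*r^2 by nlinarith)]
  linarith

lemma gAA_hasDerivAt (t : ℝ) :
    HasDerivAt (gAA r)
      (a0 r * (Real.exp (-4 * t) * (-4 * 1)) + ap r * (Real.exp (-(6 + r + uu r) * t) * (-(6 + r + uu r) * 1))
        + am r * (Real.exp (-(6 + r - uu r) * t) * (-(6 + r - uu r) * 1))) t := by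
  have h1 : HasDerivAt (fun s : ℝ => Real.exp (-4 * s)) (Real.exp (-4 * t) * (-4 * 1)) t :=
    ((hasDerivAt_id t).const_mul (-4)).exp
  have h2 : HasDerivAt (fun s : ℝ => Real.exp (-(6 + r + uu r) * s))
      (Real.exp (-(6 + r + uu r) * t) * (-(6 + r + uu r) * 1)) t :=
    ((hasDerivAt_id t).const_mul (-(6 + r + uu r))).exp
  have h3 : HasDerivAt (fun s : ℝ => Real.exp (-(6 + r - uu r) * s))
      (Real.exp (-(6 + r - uu r) * t) * (-(6 + r - uu r) * 1)) t :=
    ((hasDerivAt_id t).const_mul (-(6 + r - uu r))).exp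
  exact (((h1.const_mul (a0 r)).add (h2.const_mul (ap r))).add (h3.const_mul (am r))).add_const
    ((qA r)^2)

lemma gAA_deriv_neg (hr : 0 < r) (t : ℝ) : deriv (gAA r) t < 0 := by
  rw [(gAA_hasDerivAt t).deriv]
  have h0 := a0_pos hr
  have hp := ap_pos hr
  have hm := am_pos hr
  have hu := uu_pos hr
  have hul := uu_lt hr
  have e1 : (0:ℝ) < Real.exp (-4 * t) := Real.exp_pos _
  have e2 : (0:ℝ) < Real.exp (-(6 + r + uu r) * t) := Real.exp_pos _
  have e3 : (0:ℝ) < Real.exp (-(6 + r - uu r) * t) := Real.exp_pos _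
  have t1 : a0 r * (Real.exp (-4 * t) * (-4 * 1)) < 0 := by nlinarith [mul_pos h0 e1]
  have t2 : ap r * (Real.exp (-(6 + r + uu r) * t) * (-(6 + r + uu r) * 1)) < 0 := by
    nlinarith [mul_pos hp e2]
  have t3 : am r * (Real.exp (-(6 + r - uu r) * t) * (-(6 + r - uu r) * 1)) < 0 := by
    nlinarith [mul_pos hm e3]
  linarith

lemma gAA_tendsto (hr : 0 < r) : Tendsto (gAA r) atTop (nhds ((qA r)^2)) := by
  have h : ∀ c : ℝ, 0 < c → Tendsto (fun t : ℝ => Real.exp (-c * t)) atTop (nhds 0) := by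
    intro c hc
    have : Tendsto (fun t : ℝ => -c * t) atTop atBot :=
      Tendsto.const_mul_atTop_of_neg (by linarith) tendsto_id
    exact Real.tendsto_exp_atBot.comp this
  have hu := uu_pos hr
  have hul := uu_lt hr
  have h1 := (h 4 (by norm_num)).const_mul (a0 r)
  have h2 := (h (6 + r + uu r) (by linarith)).const_mul (ap r)
  have h3 := (h (6 + r - uu r) (by linarith)).const_mul (am r)
  have := ((h1.add h2).add h3).add_const ((qA r)^2)
  have heq : gAA r = fun k => a0 r * Real.exp (-4 * k) + ap r * Real.exp (-(6 + r + uu r) * k)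
      + am r * Real.exp (-(6 + r - uu r) * k) + (qA r)^2 := rfl
  rw [heq]
  convert this using 2 <;> ring_nf

end aux

/-- g is a strictly decreasing diffeomorphism from [0,∞) onto ((q²), g(0)]. -/
theorem stmt11 (r : ℝ) (hr : 0 < r) :
    StrictAntiOn (gAA r) (Ici 0) ∧
    Set.BijOn (gAA r) (Ici 0) (Ioc ((qA r)^2) (gAA r 0)) ∧
    (∀ t : ℝ, DifferentiableAt ℝ (gAA r) t) ∧
    ∀ t : ℝ, deriv (gAA r) t ≠ 0 := by
  have hdiff : ∀ t : ℝ, DifferentiableAt ℝ (gAA r) t :=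
    fun t => (gAA_hasDerivAt t).differentiableAt
  have hcont : Continuous (gAA r) := by
    rw [continuous_iff_continuousAt]; exact fun t => (hdiff t).continuousAt
  have hanti : StrictAntiOn (gAA r) (Ici 0) := by
    apply StrictAntiOn.mono (s := univ) _ (subset_univ _)
    have : StrictAnti (gAA r) :=
      strictAnti_of_deriv_neg (fun t => gAA_deriv_neg hr t)
    exact fun x _ y _ h => this h
  have hgt : ∀ t : ℝ, (qA r)^2 < gAA r t := by
    intro t
    have h0 := a0_pos hr
    have hp := ap_pos hr
    have hm := am_pos hr
    have := mul_pos h0 (Real.exp_pos (-4 * t))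
    have := mul_pos hp (Real.exp_pos (-(6 + r + uu r) * t))
    have := mul_pos hm (Real.exp_pos (-(6 + r - uu r) * t))
    unfold gAA; linarith
  refine ⟨hanti, ⟨?_, hanti.injOn, ?_⟩, hdiff, fun t => (gAA_deriv_neg hr t).ne⟩
  · intro t ht
    refine ⟨hgt t, ?_⟩
    rcases eq_or_lt_of_le (show (0:ℝ) ≤ t from ht) with h | h
    · exact le_of_eq (by rw [← h])
    · exact le_of_lt (hanti self_mem_Ici ht h)
  · intro y hy
    obtain ⟨hy1, hy2⟩ := hy
    obtain ⟨T, hT0, hTy⟩ : ∃ T : ℝ, 0 ≤ T ∧ gAA r T < y := by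
      have hev : ∀ᶠ t in atTop, gAA r t < y ∧ 0 ≤ t :=
        ((gAA_tendsto hr).eventually_lt_const hy1).and (eventually_ge_atTop 0)
      obtain ⟨T, hT⟩ := hev.exists
      exact ⟨T, hT.2, hT.1⟩
    have hsub : Icc (gAA r T) (gAA r 0) ⊆ gAA r '' Icc 0 T :=
      intermediate_value_Icc' hT0 hcont.continuousOn
    obtain ⟨t, ht, hty⟩ := hsub ⟨le_of_lt hTy, hy2⟩
    exact ⟨t, ht.1, hty⟩
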